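/- arXiv:math/0702560 — 3 statements merged into one kernel-verified Lean document; each statement's English description precedes it below -/
import Mathlib

section
/- Let f : ℝⁿ → ℝ be a continuous function with f(x) > 0 for all x, and let u : ℝⁿ → ℝ be a twice continuously differentiable function that tends to 0 at infinity and satisfies Δu(x) = 2 f(x) u(x) for all x ∈ ℝⁿ. Then u is identically zero. In other words, the operator Δ - 2f is injective on C₀²(ℝⁿ). -/
/-! Maximum principle: if `u > 0` somewhere, then, since `u → 0` at infinity, `u` attains a
positive global maximum at some `z`. Restricting `u` to the coordinate lines through `z` gives
one-variable functions with a maximum at `0`, so each pure second derivative at `z` is `≤ 0` and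
`Δu(z) ≤ 0 < 2 f(z) u(z)`. Hence `u ≤ 0`, and the same argument applied to `-u` gives `u ≥ 0`. -/

open Filter Topology

theorem IsLocalMax.deriv_deriv_nonpos {g : ℝ → ℝ} {a : ℝ} (h : IsLocalMax g a)
    (hc : ContinuousAt g a) : deriv (deriv g) a ≤ 0 := by
  by_contra! hpos
  have hmin : IsLocalMin g a := isLocalMin_of_deriv_deriv_pos hpos h.deriv_eq_zero hc
  have hconst : g =ᶠ[𝓝 a] fun _ => g a := by
    filter_upwards [h, hmin] with t hmax hmin using le_antisymm hmax hmin
  refine hpos.ne' ?_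
  rw [hconst.deriv.deriv_eq]
  simp

variable {E : Type*} [NormedAddCommGroup E] [NormedSpace ℝ E]

theorem iteratedDeriv_two_comp_line {u : E → ℝ} (hu : ContDiff ℝ 2 u) (z v : E) :
    iteratedDeriv 2 (fun t : ℝ => u (z + t • v)) 0 = iteratedFDeriv ℝ 2 u z ![v, v] := by
  have hline : (fun t : ℝ => u (z + t • v))
      = (fun y => u (z + y)) ∘ ContinuousLinearMap.toSpanSingleton ℝ v := by
    ext t; simp
  rw [iteratedDeriv_eq_iteratedFDeriv, hline,
    (ContinuousLinearMap.toSpanSingleton ℝ v).iteratedFDeriv_comp_right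
      (f := fun y => u (z + y)) (hu.comp (contDiff_const.add contDiff_id)) 0 le_rfl,
    iteratedFDeriv_comp_add_left]
  simp only [map_zero, add_zero, ContinuousMultilinearMap.compContinuousLinearMap_apply,
    ContinuousLinearMap.toSpanSingleton_apply, one_smul]
  congr 1
  ext i; fin_cases i <;> rfl

theorem IsLocalMax.iteratedFDeriv_two_nonpos {u : E → ℝ} {z : E} (h : IsLocalMax u z)
    (hu : ContDiff ℝ 2 u) (v : E) : iteratedFDeriv ℝ 2 u z ![v, v] ≤ 0 := by
  have hline : IsLocalMax (fun t : ℝ => u (z + t • v)) 0 := by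
    refine IsLocalMax.comp_continuous (by simpa using h) ?_
    fun_prop
  rw [← iteratedDeriv_two_comp_line hu, iteratedDeriv_succ, iteratedDeriv_one]
  exact hline.deriv_deriv_nonpos (hu.continuous.comp (by fun_prop)).continuousAt

theorem nonpos_of_tendsto_cocompact_of_sum_iteratedFDeriv_two_pos {ι : Type*} [Fintype ι]
    (v : ι → E) {u : E → ℝ} (hu : ContDiff ℝ 2 u) (hu0 : Tendsto u (cocompact E) (𝓝 0))
    (hpos : ∀ x, 0 < u x → 0 < ∑ i, iteratedFDeriv ℝ 2 u x ![v i, v i]) (x : E) :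
    u x ≤ 0 := by
  by_contra! hx
  obtain ⟨z, hz⟩ := hu.continuous.exists_forall_ge' x
    ((hu0.eventually_lt_const hx).mono fun _ => le_of_lt)
  have hmax : IsLocalMax u z := Eventually.of_forall hz
  have hsum := hpos z (hx.trans_le (hz x))
  exact hsum.not_ge (Finset.sum_nonpos fun i _ => hmax.iteratedFDeriv_two_nonpos hu (v i))

theorem schrodinger_injective_general
    {n : ℕ} (f u : EuclideanSpace ℝ (Fin n) → ℝ)
    (hf_pos : ∀ x, 0 < f x)
    (hu : ContDiff ℝ 2 u)
    (hu_zero : Filter.Tendsto u (Filter.cocompact (EuclideanSpace ℝ (Fin n))) (nhds 0))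
    (heq : ∀ x, (∑ i : Fin n,
        iteratedFDeriv ℝ 2 u x ![EuclideanSpace.single i 1, EuclideanSpace.single i 1])
      = 2 * f x * u x) :
    ∀ x, u x = 0 := by
  have hneg_eq : ∀ x, (∑ i : Fin n,
      iteratedFDeriv ℝ 2 (-u) x ![EuclideanSpace.single i 1, EuclideanSpace.single i 1])
      = 2 * f x * (-u) x := by
    intro x
    simp only [iteratedFDeriv_neg_apply, neg_apply,
      Finset.sum_neg_distrib, heq x, Pi.neg_apply, mul_neg]
  have hu_le : ∀ x, u x ≤ 0 :=
    nonpos_of_tendsto_cocompact_of_sum_iteratedFDeriv_two_pos _ hu hu_zero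
      fun x hx => (heq x).symm ▸ mul_pos (mul_pos two_pos (hf_pos x)) hx
  have hneg_le : ∀ x, -u x ≤ 0 :=
    nonpos_of_tendsto_cocompact_of_sum_iteratedFDeriv_two_pos _ hu.neg
      (by simpa using hu_zero.neg)
      fun x hx => (hneg_eq x).symm ▸ mul_pos (mul_pos two_pos (hf_pos x)) hx
  exact fun x => le_antisymm (hu_le x) (neg_nonpos.mp (hneg_le x))

/-- If `f : ℝⁿ → ℝ` is continuous and everywhere positive and `u` is a `C²` function
vanishing at infinity with `Δu = 2 f u`, then `u ≡ 0`: the Schrödinger operator `Δ - 2f`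
is injective on `C₀²(ℝⁿ)`. -/
theorem schrodinger_injective
    {n : ℕ} (hn : 1 ≤ n) (f u : EuclideanSpace ℝ (Fin n) → ℝ)
    (hf_cont : Continuous f) (hf_pos : ∀ x, 0 < f x)
    (hu : ContDiff ℝ 2 u)
    (hu_zero : Filter.Tendsto u (Filter.cocompact (EuclideanSpace ℝ (Fin n))) (nhds 0))
    (heq : ∀ x, (∑ i : Fin n,
        iteratedFDeriv ℝ 2 u x ![EuclideanSpace.single i 1, EuclideanSpace.single i 1])
      = 2 * f x * u x) :
    ∀ x, u x = 0 :=
  schrodinger_injective_general f u hf_pos hu hu_zero heq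
end

section
/- Let f : ℝⁿ → ℝ be a continuous function with compact support. Then for every ε > 0 there exists a smooth function ψ : ℝⁿ → ℝ with ∫ ψ(x)² dx = 1 and ∫ (Δψ(x) - 2 f(x) ψ(x))² dx < ε². In other words, 0 belongs to the approximate point spectrum of the Schrödinger operator Δ - 2f on L²(ℝⁿ), so if this operator is injective its inverse is unbounded. -/
open MeasureTheory Real

/-- The Laplacian of `g` at `x`: the sum of the second partial derivatives of `g` in the
coordinate directions. -/
noncomputable def laplacian {n : ℕ} (g : EuclideanSpace ℝ (Fin n) → ℝ)
    (x : EuclideanSpace ℝ (Fin n)) : ℝ :=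
  ∑ i : Fin n, iteratedFDeriv ℝ 2 g x ![EuclideanSpace.single i 1, EuclideanSpace.single i 1]

section aux

variable {n : ℕ} (a c : ℝ)

/-- A Gaussian on `ℝⁿ`. -/
noncomputable def gauss (x : EuclideanSpace ℝ (Fin n)) : ℝ := c * rexp (-a * ‖x‖ ^ 2)

/-- Its Fréchet derivative. -/
noncomputable def gaussD (x : EuclideanSpace ℝ (Fin n)) : EuclideanSpace ℝ (Fin n) →L[ℝ] ℝ :=
  (gauss a c x * (-2 * a)) • innerSL ℝ x

lemma hasFDerivAt_gauss (x : EuclideanSpace ℝ (Fin n)) :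
    HasFDerivAt (gauss a c) (gaussD a c x) x := by
  have h1 : HasFDerivAt (fun x : EuclideanSpace ℝ (Fin n) => ‖x‖ ^ 2)
      (2 • (innerSL ℝ x)) x := by
    simpa using (hasFDerivAt_id x).norm_sq
  have h2 : HasFDerivAt (fun x : EuclideanSpace ℝ (Fin n) => -a * ‖x‖ ^ 2)
      ((-a) • (2 • (innerSL ℝ x))) x := h1.const_mul (-a)
  have h3 := (h2.exp).const_mul c
  refine h3.congr_fderiv ?_
  unfold gaussD gauss
  ext v
  simp
  ring

lemma contDiff_gauss : ContDiff ℝ (⊤ : ℕ∞) (gauss a c (n := n)) := by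
  unfold gauss
  exact contDiff_const.mul (Real.contDiff_exp.comp (contDiff_const.mul (contDiff_norm_sq ℝ)))

lemma fderiv_gauss : fderiv ℝ (gauss a c (n := n)) = gaussD a c :=
  funext fun x => (hasFDerivAt_gauss a c x).fderiv

lemma second_deriv_gauss (x : EuclideanSpace ℝ (Fin n)) (i : Fin n) :
    iteratedFDeriv ℝ 2 (gauss a c) x ![EuclideanSpace.single i 1, EuclideanSpace.single i 1]
      = gauss a c x * (4 * a ^ 2 * (x i) ^ 2 - 2 * a) := by
  rw [iteratedFDeriv_two_apply]
  simp only [Matrix.cons_val_zero, Matrix.cons_val_one, Matrix.head_cons]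
  set e : EuclideanSpace ℝ (Fin n) := EuclideanSpace.single i 1 with he
  have hdiff : DifferentiableAt ℝ (fderiv ℝ (gauss a c (n := n))) x := by
    have := ((contDiff_gauss a c (n := n)).fderiv_right (m := 1) (by exact WithTop.coe_le_coe.mpr le_top)).differentiable one_ne_zero
    exact this x
  have happ := fderiv_clm_apply (c := fderiv ℝ (gauss a c (n := n))) (u := fun _ => e)
    hdiff (differentiableAt_const e)
  have happ2 : fderiv ℝ (fun y => fderiv ℝ (gauss a c) y e) x e
      = fderiv ℝ (fderiv ℝ (gauss a c (n := n))) x e e := by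
    rw [happ]
    simp
  rw [← happ2]
  have hfun : (fun y : EuclideanSpace ℝ (Fin n) => fderiv ℝ (gauss a c) y e)
      = fun y => (gauss a c y * (-2 * a)) * (y i) := by
    funext y
    rw [fderiv_gauss]
    unfold gaussD
    simp [he, EuclideanSpace.inner_single_right]
  rw [hfun]
  have hproj : HasFDerivAt (fun y : EuclideanSpace ℝ (Fin n) => y i)
      (EuclideanSpace.proj (𝕜 := ℝ) i) x := (EuclideanSpace.proj (𝕜 := ℝ) i).hasFDerivAt
  have hs : HasFDerivAt (fun y : EuclideanSpace ℝ (Fin n) => gauss a c y * (-2 * a))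
      ((-2 * a) • gaussD a c x) x := (hasFDerivAt_gauss a c x).mul_const (-2 * a)
  have hp : HasFDerivAt (fun y : EuclideanSpace ℝ (Fin n) => gauss a c y * (-2 * a) * y i) _ x :=
    hs.mul hproj
  rw [hp.fderiv]
  have hprojapp : (EuclideanSpace.proj (𝕜 := ℝ) i) e = 1 := by
    simp [he, EuclideanSpace.single_apply]
  have hDapp : gaussD a c x e = gauss a c x * (-2 * a) * (x i) := by
    unfold gaussD
    simp [he, EuclideanSpace.inner_single_right]
  simp only [ContinuousLinearMap.add_apply, ContinuousLinearMap.smul_apply, smul_eq_mul,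
    hprojapp, hDapp]
  ring

lemma laplacian_gauss (x : EuclideanSpace ℝ (Fin n)) :
    laplacian (gauss a c) x = gauss a c x * (4 * a ^ 2 * ‖x‖ ^ 2 - 2 * a * n) := by
  unfold laplacian
  rw [Finset.sum_congr rfl fun i _ => second_deriv_gauss a c x i, ← Finset.mul_sum]
  congr 1
  have hnorm : ∑ i : Fin n, (x i) ^ 2 = ‖x‖ ^ 2 := by
    rw [EuclideanSpace.norm_eq, sq_sqrt (Finset.sum_nonneg fun i _ => sq_nonneg _)]
    simp [sq_abs]
  rw [Finset.sum_sub_distrib, ← Finset.mul_sum, hnorm]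
  simp [Finset.card_fin, mul_comm]

lemma integrable_exp_gauss (b : ℝ) (hb : 0 < b) :
    Integrable (fun x : EuclideanSpace ℝ (Fin n) => rexp (-b * ‖x‖ ^ 2)) := by
  have h := (GaussianFourier.integrable_cexp_neg_mul_sq_norm_add
    (V := EuclideanSpace ℝ (Fin n)) (b := (b : ℂ)) (by simpa using hb) 0 0).norm
  convert h using 2 with x
  simp [Complex.norm_exp, ← Complex.ofReal_pow]

lemma rpow_sq_gauss (a : ℝ) (ha : 0 < a) :
    (((2 * a / π) ^ ((n : ℝ) / 4)) ^ 2 : ℝ) = (2 * a / π) ^ ((n : ℝ) / 2) := by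
  have hbase : (0 : ℝ) < 2 * a / π := by positivity
  rw [← Real.rpow_natCast ((2 * a / π) ^ ((n : ℝ) / 4)) 2, ← Real.rpow_mul hbase.le]
  congr 1
  push_cast
  ring

lemma integral_gauss_sq (a : ℝ) (ha : 0 < a) :
    ∫ x : EuclideanSpace ℝ (Fin n), (gauss a ((2 * a / π) ^ ((n : ℝ) / 4)) x) ^ 2 = 1 := by
  have hπ : (0 : ℝ) < π := pi_pos
  have hbase : (0 : ℝ) < 2 * a / π := by positivity
  unfold gauss
  have hexp : ∀ x : EuclideanSpace ℝ (Fin n),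
      (rexp (-a * ‖x‖ ^ 2)) ^ 2 = rexp (-(2 * a) * ‖x‖ ^ 2) := by
    intro x; rw [sq, ← Real.exp_add]; congr 1; ring
  simp_rw [mul_pow, rpow_sq_gauss a ha, hexp]
  rw [integral_const_mul, GaussianFourier.integral_rexp_neg_mul_sq_norm (by positivity),
    finrank_euclideanSpace_fin,
    ← Real.mul_rpow hbase.le (by positivity),
    show (2 * a / π) * (π / (2 * a)) = 1 by field_simp]
  exact Real.one_rpow _

lemma exp_bound (N u : ℝ) (hu : 0 ≤ u) :
    rexp (-u) * (2 * u - N) ^ 2 ≤ 32 + 2 * N ^ 2 := by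
  have hE : (0 : ℝ) < rexp u := Real.exp_pos u
  have hE1 : (1 : ℝ) ≤ rexp u := Real.one_le_exp hu
  have hu2 : u ^ 2 ≤ 4 * rexp u := by
    have h := Real.add_one_le_exp (u / 2)
    have hs : rexp (u / 2) * rexp (u / 2) = rexp u := by rw [← Real.exp_add]; ring_nf
    nlinarith [sq_nonneg (u / 2)]
  rw [Real.exp_neg, inv_mul_le_iff₀ hE]
  nlinarith [sq_nonneg (2 * u + N), sq_nonneg N]

end aux

/-- `0` is in the approximate point spectrum of the Schrödinger operator `Δ - 2f` for
`f` continuous with compact support: there are smooth `L²`-normalized functions `ψ` with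
`‖(Δ - 2f) ψ‖₂` arbitrarily small. -/
theorem zero_mem_approx_point_spectrum
    {n : ℕ} (hn : 1 ≤ n) (f : EuclideanSpace ℝ (Fin n) → ℝ)
    (hf_cont : Continuous f) (hf_supp : HasCompactSupport f)
    (ε : ℝ) (hε : 0 < ε) :
    ∃ ψ : EuclideanSpace ℝ (Fin n) → ℝ, ContDiff ℝ (⊤ : ℕ∞) ψ ∧
      (∫ x, ψ x ^ 2) = 1 ∧
      (∫ x, (laplacian ψ x - 2 * f x * ψ x) ^ 2) < ε ^ 2 := by
  have hπ : (0 : ℝ) < π := pi_pos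
  set p : ℝ := (n : ℝ) / 2 with hp_def
  have hp : 0 < p := by
    have : (1 : ℝ) ≤ (n : ℝ) := by exact_mod_cast hn
    simp only [hp_def]; linarith
  set M : ℝ := 32 + 2 * (n : ℝ) ^ 2 with hM_def
  have hM : 0 < M := by positivity
  have hIf : Integrable (fun x : EuclideanSpace ℝ (Fin n) => f x ^ 2) := by
    have hc : Continuous fun x : EuclideanSpace ℝ (Fin n) => f x ^ 2 := hf_cont.pow 2
    have hs : HasCompactSupport fun x : EuclideanSpace ℝ (Fin n) => f x ^ 2 := by
      have := hf_supp.mul_right (f' := f)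
      simpa [sq, Pi.mul_def] using this
    exact hc.integrable_of_hasCompactSupport hs
  set I : ℝ := ∫ x : EuclideanSpace ℝ (Fin n), f x ^ 2 with hI_def
  -- the bound tends to 0 as a → 0⁺
  have h1 : Filter.Tendsto (fun a : ℝ => 8 * a ^ 2 * M * (2 : ℝ) ^ p)
      (nhdsWithin 0 (Set.Ioi 0)) (nhds 0) := by
    have hc : Continuous fun a : ℝ => 8 * a ^ 2 * M * (2 : ℝ) ^ p := by continuity
    have := (hc.tendsto 0).mono_left (nhdsWithin_le_nhds (s := Set.Ioi (0:ℝ)))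
    simpa using this
  have h2 : Filter.Tendsto (fun a : ℝ => 8 * (2 * a / π) ^ p * I)
      (nhdsWithin 0 (Set.Ioi 0)) (nhds 0) := by
    have hb : Filter.Tendsto (fun a : ℝ => 2 * a / π) (nhdsWithin 0 (Set.Ioi 0)) (nhds 0) := by
      have hc : Continuous fun a : ℝ => 2 * a / π := by continuity
      have := (hc.tendsto 0).mono_left (nhdsWithin_le_nhds (s := Set.Ioi (0:ℝ)))
      simpa using this
    have hrpow : Filter.Tendsto (fun a : ℝ => (2 * a / π) ^ p)
        (nhdsWithin 0 (Set.Ioi 0)) (nhds 0) := by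
      have hct : ContinuousAt (fun x : ℝ => x ^ p) 0 :=
        Real.continuousAt_rpow_const 0 p (Or.inr hp.le)
      have := hct.tendsto.comp hb
      simpa [Function.comp_def, Real.zero_rpow hp.ne'] using this
    have := (hrpow.const_mul (8 : ℝ)).mul_const I
    simpa using this
  have hF : Filter.Tendsto
      (fun a : ℝ => 8 * a ^ 2 * M * (2 : ℝ) ^ p + 8 * (2 * a / π) ^ p * I)
      (nhdsWithin 0 (Set.Ioi 0)) (nhds 0) := by
    simpa using h1.add h2
  have hε2 : (0 : ℝ) < ε ^ 2 := by positivity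
  obtain ⟨a, haF, ha0⟩ :=
    ((hF.eventually (gt_mem_nhds hε2)).and self_mem_nhdsWithin).exists
  set c : ℝ := (2 * a / π) ^ ((n : ℝ) / 4) with hc_def
  refine ⟨gauss a c, contDiff_gauss a c, integral_gauss_sq a ha0, ?_⟩
  -- pointwise bound
  have hbound : ∀ x : EuclideanSpace ℝ (Fin n),
      (laplacian (gauss a c) x - 2 * f x * gauss a c x) ^ 2
        ≤ (8 * a ^ 2 * M * c ^ 2) * rexp (-a * ‖x‖ ^ 2) + (8 * c ^ 2) * f x ^ 2 := by
    intro x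
    rw [laplacian_gauss]
    set t : ℝ := ‖x‖ ^ 2 with ht
    have htn : 0 ≤ t := by positivity
    have hE0 : 0 < rexp (-a * t) := Real.exp_pos _
    have hE1 : rexp (-a * t) ≤ 1 := by
      rw [← Real.exp_zero]
      apply Real.exp_le_exp.mpr
      nlinarith
    have hkey : rexp (-a * t) * (2 * (a * t) - (n : ℝ)) ^ 2 ≤ M := by
      have := exp_bound (n : ℝ) (a * t) (by positivity)
      simpa [hM_def, neg_mul] using this
    have hψ : gauss a c x = c * rexp (-a * t) := rfl
    rw [hψ]
    set E : ℝ := rexp (-a * t) with hE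
    have hsq : ∀ u v : ℝ, (u - v) ^ 2 ≤ 2 * u ^ 2 + 2 * v ^ 2 := by
      intro u v; nlinarith [sq_nonneg (u + v)]
    calc (c * E * (4 * a ^ 2 * t - 2 * a * n) - 2 * f x * (c * E)) ^ 2
        ≤ 2 * (c * E * (4 * a ^ 2 * t - 2 * a * n)) ^ 2 + 2 * (2 * f x * (c * E)) ^ 2 :=
          hsq _ _
      _ = (8 * a ^ 2 * c ^ 2 * E) * (E * (2 * (a * t) - (n : ℝ)) ^ 2)
            + (8 * c ^ 2 * f x ^ 2) * E ^ 2 := by ring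
      _ ≤ (8 * a ^ 2 * c ^ 2 * E) * M + (8 * c ^ 2 * f x ^ 2) * 1 := by
          apply add_le_add
          · exact mul_le_mul_of_nonneg_left hkey (by positivity)
          · apply mul_le_mul_of_nonneg_left _ (by positivity)
            nlinarith
      _ = (8 * a ^ 2 * M * c ^ 2) * E + (8 * c ^ 2) * f x ^ 2 := by ring
  -- integrability of the majorant
  have hint1 : Integrable (fun x : EuclideanSpace ℝ (Fin n) =>
      (8 * a ^ 2 * M * c ^ 2) * rexp (-a * ‖x‖ ^ 2)) :=
    (integrable_exp_gauss a ha0).const_mul _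
  have hint2 : Integrable (fun x : EuclideanSpace ℝ (Fin n) => (8 * c ^ 2) * f x ^ 2) :=
    hIf.const_mul _
  have hGint := hint1.add hint2
  have hle := integral_mono_of_nonneg
    (ae_of_all _ fun x => sq_nonneg (laplacian (gauss a c) x - 2 * f x * gauss a c x))
    hGint (ae_of_all _ hbound)
  refine lt_of_le_of_lt hle ?_
  -- compute the integral of the majorant
  simp only [Pi.add_apply]
  rw [integral_add hint1 hint2, integral_const_mul, integral_const_mul,
    GaussianFourier.integral_rexp_neg_mul_sq_norm ha0, finrank_euclideanSpace_fin]
  have hc2 : c ^ 2 = (2 * a / π) ^ p := by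
    rw [hc_def, rpow_sq_gauss a ha0]
  have hc2pi : c ^ 2 * (π / a) ^ p = (2 : ℝ) ^ p := by
    rw [hc2, ← Real.mul_rpow (by positivity) (by positivity)]
    congr 1
    field_simp
  calc (8 * a ^ 2 * M * c ^ 2) * (π / a) ^ ((n : ℝ) / 2) + (8 * c ^ 2) * I
      = 8 * a ^ 2 * M * (c ^ 2 * (π / a) ^ p) + 8 * c ^ 2 * I := by rw [hp_def]; ring
    _ = 8 * a ^ 2 * M * (2 : ℝ) ^ p + 8 * (2 * a / π) ^ p * I := by rw [hc2pi, hc2]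
    _ < ε ^ 2 := haF
end

section
/- Let c ≥ 0. There is no differentiable function g : [0,∞) → ℝ satisfying g(0) < -2c and g'(s) ≤ -g(s)² - 2c·g(s) for all s ≥ 0. Equivalently, any differentiable solution of this differential inequality with g(0) < -2c must blow up to -∞ in finite time. -/
/-- Riccati-type differential inequality: there is no function `g` differentiable on
`[0,∞)` with `g'(s) ≤ -g(s)² - 2c g(s)` there and `g(0) < -2c`; any such solution would
blow up to `-∞` in finite time. -/
theorem no_global_solution_of_riccati_inequality
    (c : ℝ) (hc : 0 ≤ c) (g g' : ℝ → ℝ)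
    (hderiv : ∀ s : ℝ, 0 ≤ s → HasDerivAt g (g' s) s)
    (hineq : ∀ s : ℝ, 0 ≤ s → g' s ≤ -(g s) ^ 2 - 2 * c * g s) :
    ¬ g 0 < -2 * c := by
  intro hg0
  set h : ℝ → ℝ := fun s => g s + 2 * c with hh
  have hd : ∀ s : ℝ, 0 ≤ s → HasDerivAt h (g' s) s := by
    intro s hs
    exact (hderiv s hs).add_const _
  have hineq' : ∀ s : ℝ, 0 ≤ s → g' s ≤ -(h s) ^ 2 + 2 * c * h s := by
    intro s hs
    have := hineq s hs
    simp only [hh]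
    nlinarith
  have h0 : h 0 < 0 := by simp only [hh]; linarith
  have hcont : ∀ s : ℝ, 0 ≤ s → ContinuousAt h s := fun s hs => (hd s hs).continuousAt
  -- Step 1: h stays negative.
  have hneg : ∀ s : ℝ, 0 ≤ s → h s < 0 := by
    by_contra hcon
    push_neg at hcon
    obtain ⟨t, ht0, ht⟩ := hcon
    set B : Set ℝ := {s | s ∈ Set.Icc 0 t ∧ 0 ≤ h s} with hB
    have hBne : B.Nonempty := ⟨t, ⟨ht0, le_refl t⟩, ht⟩
    have hBbdd : BddBelow B := ⟨0, fun x hx => hx.1.1⟩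
    have hBclosed : IsClosed B := by
      have hcont' : ContinuousOn h (Set.Icc 0 t) := fun x hx =>
        (hcont x hx.1).continuousWithinAt
      have : B = Set.Icc 0 t ∩ h ⁻¹' Set.Ici 0 := by
        ext x; simp [hB, Set.mem_setOf_eq, and_comm]
      rw [this]
      exact (hcont'.preimage_isClosed_of_isClosed isClosed_Icc isClosed_Ici)
    set u : ℝ := sInf B with hu
    have huB : u ∈ B := hBclosed.csInf_mem hBne hBbdd
    have hu0 : 0 ≤ u := huB.1.1
    have hupos : 0 < u := by
      rcases lt_or_eq_of_le hu0 with h' | h'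
      · exact h'
      · exfalso; have := huB.2; rw [← h'] at this; linarith
    -- On [0, u), h < 0
    have hlt : ∀ x ∈ Set.Ico (0:ℝ) u, h x < 0 := by
      intro x hx
      by_contra hxc
      push_neg at hxc
      have hxB : x ∈ B := ⟨⟨hx.1, le_trans hx.2.le huB.1.2⟩, hxc⟩
      exact absurd (csInf_le hBbdd hxB) (not_le.mpr hx.2)
    -- h is antitone on [0,u]
    have hanti : AntitoneOn h (Set.Icc 0 u) := by
      apply antitoneOn_of_deriv_nonpos (convex_Icc 0 u)
      · intro x hx
        exact (hcont x hx.1).continuousWithinAt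
      · intro x hx
        rw [interior_Icc] at hx
        exact ((hd x hx.1.le).differentiableAt).differentiableWithinAt
      · intro x hx
        rw [interior_Icc] at hx
        rw [(hd x hx.1.le).deriv]
        have hxneg : h x < 0 := hlt x ⟨hx.1.le, hx.2⟩
        have := hineq' x hx.1.le
        nlinarith
    have := hanti ⟨le_refl 0, hu0⟩ ⟨hu0, le_refl u⟩ hu0
    have := huB.2
    linarith
  -- Step 2: h' ≤ -h², so (1/h - s) is monotone on [0,∞).
  set φ : ℝ → ℝ := fun s => (h s)⁻¹ - s with hφ
  have hdφ : ∀ s : ℝ, 0 ≤ s → HasDerivAt φ (-(g' s) / (h s) ^ 2 - 1) s := by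
    intro s hs
    exact ((hd s hs).inv (hneg s hs).ne).sub ((hasDerivAt_id s).congr_deriv rfl)
  have hφmono : MonotoneOn φ (Set.Ici 0) := by
    apply monotoneOn_of_deriv_nonneg (convex_Ici 0)
    · intro x hx
      exact (hdφ x hx).continuousAt.continuousWithinAt
    · intro x hx
      rw [interior_Ici] at hx
      exact ((hdφ x hx.le).differentiableAt).differentiableWithinAt
    · intro x hx
      rw [interior_Ici] at hx
      rw [(hdφ x hx.le).deriv]
      have hx0 : (0:ℝ) ≤ x := hx.le
      have h1 := hineq' x hx0
      have h2 : h x < 0 := hneg x hx0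
      have h3 : (0:ℝ) < (h x) ^ 2 := (sq_nonneg _).lt_of_ne (Ne.symm (pow_ne_zero 2 h2.ne))
      rw [sub_nonneg, le_div_iff₀ h3]
      nlinarith
  -- Conclude: contradiction at s = 1 - 1/h 0
  set s₀ : ℝ := 1 - (h 0)⁻¹ with hs₀
  have hinv0 : (h 0)⁻¹ < 0 := inv_lt_zero.mpr h0
  have hs₀pos : 0 ≤ s₀ := by simp only [hs₀]; linarith
  have := hφmono (Set.self_mem_Ici) (Set.mem_Ici.mpr hs₀pos) hs₀pos
  have hinv : (h s₀)⁻¹ < 0 := inv_lt_zero.mpr (hneg s₀ hs₀pos)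
  simp only [hφ, hs₀] at this
  linarith
end
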